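/- arXiv:1912.01351 — 3 statements merged into one kernel-verified Lean document; each statement's English description precedes it below -/
import Mathlib

section
/- In the octonions, q₀(λ·(zμ)) = (q₀(μ)·q₀(z))·q₀(λ) for all nonzero λ, μ, z ∈ 𝕆, where q₀(z) = conj(z)/|z|⁸. -/
noncomputable section

/-- The octonions, realized as the Cayley–Dickson double of the quaternions. -/
abbrev 𝕆 : Type := Quaternion ℝ × Quaternion ℝ

namespace Octo

/-- Cayley–Dickson multiplication: (a,b)(c,d) = (ac − d b̄, ā d + c b). -/
def omul (x y : 𝕆) : 𝕆 :=
  (x.1 * y.1 - y.2 * star x.2, star x.1 * y.2 + y.1 * x.2)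

/-- Octonionic conjugation. -/
def oconj (x : 𝕆) : 𝕆 := (star x.1, -x.2)

/-- The unit octonion. -/
def oone : 𝕆 := (1, 0)

/-- Real part. -/
def re (x : 𝕆) : ℝ := x.1.re

/-- Euclidean inner product on 𝕆 ≅ ℝ⁸ (coordinatewise). -/
def oinner (x y : 𝕆) : ℝ :=
  x.1.re * y.1.re + x.1.imI * y.1.imI + x.1.imJ * y.1.imJ + x.1.imK * y.1.imK +
  x.2.re * y.2.re + x.2.imI * y.2.imI + x.2.imJ * y.2.imJ + x.2.imK * y.2.imK

/-- The norm N(z) = z·conj(z), a real scalar. -/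
def N (x : 𝕆) : ℝ := re (omul x (oconj x))

/-- The trace S(z) = z + conj(z), a real scalar. -/
def S (x : 𝕆) : ℝ := re (x + oconj x)

/-- The Euclidean absolute value |z| = √N(z). -/
def oabs (x : 𝕆) : ℝ := Real.sqrt (N x)

/-- The octonionic Cauchy kernel q₀(z) = conj(z)/|z|⁸. -/
def q0 (x : 𝕆) : 𝕆 := (oabs x ^ 8)⁻¹ • oconj x

/-! The Cauchy kernel reverses products: conjugation reverses the order of the factors,
the norm is multiplicative (the Cayley–Dickson form of Degen's eight-square identity) and the
product is real-bilinear, so the scalar factors `|x|⁻⁸` pull out of any parenthesization. -/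

lemma omul_smul_left (r : ℝ) (x y : 𝕆) : omul (r • x) y = r • omul x y := by
  simp only [omul, Prod.smul_fst, Prod.smul_snd, Prod.smul_mk, Quaternion.star_smul,
    smul_mul_assoc, mul_smul_comm, smul_sub, smul_add]

lemma omul_smul_right (r : ℝ) (x y : 𝕆) : omul x (r • y) = r • omul x y := by
  simp only [omul, Prod.smul_fst, Prod.smul_snd, Prod.smul_mk, smul_mul_assoc, mul_smul_comm,
    smul_sub, smul_add]

lemma oconj_omul (x y : 𝕆) : oconj (omul x y) = omul (oconj y) (oconj x) := by
  simp only [omul, oconj, Prod.mk.injEq]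
  constructor
  · rw [star_sub, star_mul, star_mul]
    simp only [star_star, star_neg, neg_mul, mul_neg, sub_eq_add_neg, neg_neg]
  · simp [mul_neg, add_comm]

lemma N_eq_normSq_add_normSq (x : 𝕆) : N x = Quaternion.normSq x.1 + Quaternion.normSq x.2 := by
  simp only [N, re, omul, oconj, neg_mul, sub_neg_eq_add, mul_neg, neg_add_cancel,
    Quaternion.re_add, Quaternion.re_mul, Quaternion.re_star, Quaternion.imI_star,
    Quaternion.imJ_star, Quaternion.imK_star, Quaternion.normSq_def']
  ring

lemma N_nonneg (x : 𝕆) : 0 ≤ N x := by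
  rw [N_eq_normSq_add_normSq]
  exact add_nonneg Quaternion.normSq_nonneg Quaternion.normSq_nonneg

lemma N_omul (x y : 𝕆) : N (omul x y) = N x * N y := by
  simp only [N_eq_normSq_add_normSq, omul, Quaternion.normSq_def', Quaternion.re_mul,
    Quaternion.imI_mul, Quaternion.imJ_mul, Quaternion.imK_mul, Quaternion.re_sub,
    Quaternion.imI_sub, Quaternion.imJ_sub, Quaternion.imK_sub, Quaternion.re_add,
    Quaternion.imI_add, Quaternion.imJ_add, Quaternion.imK_add, Quaternion.re_star,
    Quaternion.imI_star, Quaternion.imJ_star, Quaternion.imK_star]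
  ring

lemma oabs_omul (x y : 𝕆) : oabs (omul x y) = oabs x * oabs y := by
  rw [oabs, oabs, oabs, N_omul, Real.sqrt_mul (N_nonneg x)]

lemma q0_omul (x y : 𝕆) : q0 (omul x y) = omul (q0 y) (q0 x) := by
  simp only [q0, oconj_omul, oabs_omul, omul_smul_left, omul_smul_right, smul_smul, mul_pow,
    mul_inv]

theorem q0_product_formula_general (lam μ z : 𝕆) :
    q0 (omul lam (omul z μ)) = omul (omul (q0 μ) (q0 z)) (q0 lam) := by
  rw [q0_omul, q0_omul]

/-- q₀(λ·(zμ)) = (q₀(μ)·q₀(z))·q₀(λ). -/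
theorem q0_product_formula (lam μ z : 𝕆)
    (hlam : lam ≠ 0) (hμ : μ ≠ 0) (hz : z ≠ 0) :
    q0 (omul lam (omul z μ)) = omul (omul (q0 μ) (q0 z)) (q0 lam) :=
  q0_product_formula_general lam μ z

end Octo
end
end

section
/- Let m₁, m₂, m₃ be distinct square-free positive integers and let Ω ⊆ 𝕆 be the set of octonions of the form γ₀ + γ₁√m₁ e₁ + γ₂√m₂ e₂ + γ₃√m₃ e₃ + γ₄√(m₁m₂) e₄ + γ₅√(m₁m₃) e₅ + γ₆√(m₂m₃) e₆ + γ₇√(m₁m₂m₃) e₇ with all γ_i ∈ ℚ. Then Ω is a ℚ-subalgebra of 𝕆 stable under conjugation, and every element of Ω has rational trace and rational norm. -/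
/-!
Write an octonion as a pair of quaternions. With s = √m₁ and t = √m₂, the quaternions
a + b s i + c t j + d s t k (a, b, c, d ∈ ℚ) form the image of the rational quaternion algebra
(-m₁, -m₂)_ℚ under i ↦ s i, j ↦ t j: a ℚ-subalgebra A of ℍ, stable under conjugation, whose
elements have rational real part. Then Ω = A × √m₃ A, and the Cayley–Dickson product
(p, r q)(p', r q') = (p p' - r² q' q̄, r (p̄ q' + p' q)) preserves this shape because r² = m₃ is
rational. Trace and norm are the real parts of z + z̄ and z z̄, which lie in Ω again.
-/

noncomputable section

namespace Octo

/-- The standard octonionic basis 1, e₁, …, e₇ (with e₁=i, e₂=j, e₄=e₁e₂, e₃=(0,1), …). -/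
def e : Fin 8 → 𝕆 :=
  ![(1, 0), ((⟨0,1,0,0⟩ : Quaternion ℝ), 0), ((⟨0,0,1,0⟩ : Quaternion ℝ), 0),
    (0, 1), ((⟨0,0,0,1⟩ : Quaternion ℝ), 0), (0, (⟨0,1,0,0⟩ : Quaternion ℝ)),
    (0, (⟨0,0,1,0⟩ : Quaternion ℝ)), (0, (⟨0,0,0,1⟩ : Quaternion ℝ))]

/-- The real coordinates of an octonion with respect to the basis `e`. -/
def coord (i : Fin 8) (z : 𝕆) : ℝ :=
  ![z.1.re, z.1.imI, z.1.imJ, z.2.re, z.1.imK, z.2.imI, z.2.imJ, z.2.imK] i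

/-- The coefficient weights 1, √m₁, √m₂, √m₃, √(m₁m₂), √(m₁m₃), √(m₂m₃), √(m₁m₂m₃). -/
def weight (m₁ m₂ m₃ : ℕ) : Fin 8 → ℝ :=
  ![1, Real.sqrt m₁, Real.sqrt m₂, Real.sqrt m₃, Real.sqrt (m₁ * m₂),
    Real.sqrt (m₁ * m₃), Real.sqrt (m₂ * m₃), Real.sqrt (m₁ * m₂ * m₃)]

open scoped Pointwise Quaternion

-- A bare `⟨a, b, c, d⟩ : ℍ[ℝ]` is elaborated at type `ℍ[ℝ,-1,0,-1]`, where the `Quaternion`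
-- simp lemmas no longer apply.
def quat (a b c d : ℝ) : ℍ[ℝ] := ⟨a, b, c, d⟩

section QuatCoordinates

variable (a b c d : ℝ)

@[simp] lemma quat_re : (quat a b c d).re = a := rfl
@[simp] lemma quat_imI : (quat a b c d).imI = b := rfl
@[simp] lemma quat_imJ : (quat a b c d).imJ = c := rfl
@[simp] lemma quat_imK : (quat a b c d).imK = d := rfl

end QuatCoordinates

lemma omul_smul_snd (r : ℝ) (p q p' q' : ℍ[ℝ]) :
    omul (p, r • q) (p', r • q') =
      (p * p' - (r * r) • (q' * star q), r • (star p * q' + p' * q)) := by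
  simp only [omul, Quaternion.star_smul, smul_mul_assoc, mul_smul_comm, smul_smul, smul_add]

section CayleyDouble

variable (A : Subalgebra ℚ ℍ[ℝ]) (r : ℝ)

def cayleyDouble : Set 𝕆 := (A : Set ℍ[ℝ]) ×ˢ (r • (A : Set ℍ[ℝ]))

variable {A r}

lemma mem_cayleyDouble {x : 𝕆} : x ∈ cayleyDouble A r ↔ x.1 ∈ A ∧ ∃ y ∈ A, r • y = x.2 :=
  Iff.rfl

lemma oone_mem_cayleyDouble : oone ∈ cayleyDouble A r :=
  ⟨A.one_mem, 0, A.zero_mem, smul_zero r⟩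

lemma add_mem_cayleyDouble {x y : 𝕆} (hx : x ∈ cayleyDouble A r) (hy : y ∈ cayleyDouble A r) :
    x + y ∈ cayleyDouble A r := by
  obtain ⟨hx₁, u, hu, hux⟩ := mem_cayleyDouble.mp hx
  obtain ⟨hy₁, v, hv, hvy⟩ := mem_cayleyDouble.mp hy
  exact mem_cayleyDouble.mpr
    ⟨A.add_mem hx₁ hy₁, u + v, A.add_mem hu hv, by rw [smul_add, hux, hvy, Prod.snd_add]⟩

lemma ratCast_smul_mem_cayleyDouble (q : ℚ) {x : 𝕆} (hx : x ∈ cayleyDouble A r) :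
    (q : ℝ) • x ∈ cayleyDouble A r := by
  obtain ⟨hx₁, u, hu, hux⟩ := mem_cayleyDouble.mp hx
  refine mem_cayleyDouble.mpr ⟨?_, q • u, A.smul_mem hu q, ?_⟩
  · rw [Prod.smul_fst, Rat.cast_smul_eq_qsmul]
    exact A.smul_mem hx₁ q
  · rw [Prod.smul_snd, ← hux, smul_comm, Rat.cast_smul_eq_qsmul]

variable (hA : ∀ x ∈ A, star x ∈ A)
include hA

lemma oconj_mem_cayleyDouble {x : 𝕆} (hx : x ∈ cayleyDouble A r) :
    oconj x ∈ cayleyDouble A r := by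
  obtain ⟨hx₁, u, hu, hux⟩ := mem_cayleyDouble.mp hx
  exact mem_cayleyDouble.mpr ⟨hA _ hx₁, -u, A.neg_mem hu, by rw [smul_neg, hux]; rfl⟩

lemma omul_mem_cayleyDouble {c : ℚ} (hr : r * r = c) {x y : 𝕆} (hx : x ∈ cayleyDouble A r)
    (hy : y ∈ cayleyDouble A r) : omul x y ∈ cayleyDouble A r := by
  obtain ⟨x₁, x₂⟩ := x
  obtain ⟨y₁, y₂⟩ := y
  obtain ⟨hx₁, u, hu, rfl⟩ := mem_cayleyDouble.mp hx
  obtain ⟨hy₁, v, hv, rfl⟩ := mem_cayleyDouble.mp hy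
  rw [omul_smul_snd, hr, Rat.cast_smul_eq_qsmul]
  exact mem_cayleyDouble.mpr
    ⟨A.sub_mem (A.mul_mem hx₁ hy₁) (A.smul_mem (A.mul_mem hv (hA u hu)) c),
      _, A.add_mem (A.mul_mem (hA _ hx₁) hv) (A.mul_mem hy₁ hu), rfl⟩

variable (hre : ∀ y ∈ A, ∃ a : ℚ, y.re = a)
include hre

lemma exists_rat_S_eq {x : 𝕆} (hx : x ∈ cayleyDouble A r) : ∃ a : ℚ, S x = a :=
  hre _ (add_mem_cayleyDouble hx (oconj_mem_cayleyDouble hA hx)).1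

lemma exists_rat_N_eq {c : ℚ} (hr : r * r = c) {x : 𝕆} (hx : x ∈ cayleyDouble A r) :
    ∃ a : ℚ, N x = a :=
  hre _ (omul_mem_cayleyDouble hA hr hx (oconj_mem_cayleyDouble hA hx)).1

end CayleyDouble

section ScaledBasis

variable {c₁ c₂ : ℚ} {s t : ℝ} (hs : s * s = c₁) (ht : t * t = c₂)

def scaledBasis : QuaternionAlgebra.Basis ℍ[ℝ] (-c₁) 0 (-c₂) where
  i := quat 0 s 0 0
  j := quat 0 0 t 0
  k := quat 0 0 0 (s * t)
  i_mul_i := by ext <;> simp [hs]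
  j_mul_j := by ext <;> simp [ht]
  i_mul_j := by ext <;> simp
  j_mul_i := by ext <;> simp [mul_comm]

lemma scaledBasis_liftHom_apply (x : ℍ[ℚ,-c₁,0,-c₂]) :
    (scaledBasis hs ht).liftHom x = quat x.re (x.imI * s) (x.imJ * t) (x.imK * (s * t)) := by
  ext <;> simp [scaledBasis, QuaternionAlgebra.Basis.lift, Rat.smul_def]

lemma scaledBasis_liftHom_star (x : ℍ[ℚ,-c₁,0,-c₂]) :
    (scaledBasis hs ht).liftHom (star x) = star ((scaledBasis hs ht).liftHom x) := by
  simp only [scaledBasis_liftHom_apply]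
  ext <;> simp

lemma star_mem_range_scaledBasis_liftHom :
    ∀ y ∈ (scaledBasis hs ht).liftHom.range, star y ∈ (scaledBasis hs ht).liftHom.range := by
  rintro _ ⟨x, rfl⟩
  exact ⟨star x, scaledBasis_liftHom_star hs ht x⟩

lemma exists_rat_re_of_mem_range_scaledBasis_liftHom :
    ∀ y ∈ (scaledBasis hs ht).liftHom.range, ∃ a : ℚ, y.re = a := by
  rintro _ ⟨x, rfl⟩
  exact ⟨x.re, congrArg (·.re) (scaledBasis_liftHom_apply hs ht x)⟩

end ScaledBasis

lemma sqrt_natCast_mul_self (m : ℕ) : √(m : ℝ) * √(m : ℝ) = ((m : ℚ) : ℝ) := by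
  rw [Rat.cast_natCast]
  exact Real.mul_self_sqrt m.cast_nonneg

def weightEmbedding (m₁ m₂ : ℕ) : ℍ[ℚ,-m₁,0,-m₂] →ₐ[ℚ] ℍ[ℝ] :=
  (scaledBasis (sqrt_natCast_mul_self m₁) (sqrt_natCast_mul_self m₂)).liftHom

lemma e_eq_quat : e = ![(quat 1 0 0 0, 0), (quat 0 1 0 0, 0), (quat 0 0 1 0, 0), (0, quat 1 0 0 0),
    (quat 0 0 0 1, 0), (0, quat 0 1 0 0), (0, quat 0 0 1 0), (0, quat 0 0 0 1)] :=
  rfl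

lemma sum_weight_smul_e (m₁ m₂ m₃ : ℕ) (γ : Fin 8 → ℚ) :
    ∑ i, ((γ i : ℝ) * weight m₁ m₂ m₃ i) • e i =
      (weightEmbedding m₁ m₂ ⟨γ 0, γ 1, γ 2, γ 4⟩,
        √m₃ • weightEmbedding m₁ m₂ ⟨γ 3, γ 5, γ 6, γ 7⟩) := by
  simp only [weightEmbedding, scaledBasis_liftHom_apply, Fin.sum_univ_eight, e_eq_quat, weight]
  ext <;> simp [Real.sqrt_mul, mul_assoc, mul_comm]

lemma setOf_sum_weight_smul_e_eq (m₁ m₂ m₃ : ℕ) :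
    {z : 𝕆 | ∃ γ : Fin 8 → ℚ, z = ∑ i, ((γ i : ℝ) * weight m₁ m₂ m₃ i) • e i} =
      cayleyDouble (weightEmbedding m₁ m₂).range √(m₃ : ℝ) := by
  ext z
  simp only [Set.mem_ofPred_eq, mem_cayleyDouble, AlgHom.mem_range]
  constructor
  · rintro ⟨γ, rfl⟩
    rw [sum_weight_smul_e]
    exact ⟨⟨_, rfl⟩, _, ⟨_, rfl⟩, rfl⟩
  · rintro ⟨⟨p, hp⟩, _, ⟨q, rfl⟩, hq⟩
    refine ⟨![p.re, p.imI, p.imJ, q.re, p.imK, q.imI, q.imJ, q.imK], ?_⟩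
    rw [sum_weight_smul_e]
    exact Prod.ext hp.symm hq.symm

theorem triquadratic_rational_subalgebra_general (m₁ m₂ m₃ : ℕ)
    (Ω : Set 𝕆)
    (hΩ : Ω = {z : 𝕆 | ∃ γ : Fin 8 → ℚ, z = ∑ i, ((γ i : ℝ) * weight m₁ m₂ m₃ i) • e i}) :
    oone ∈ Ω ∧
    (∀ a ∈ Ω, ∀ b ∈ Ω, a + b ∈ Ω) ∧
    (∀ a ∈ Ω, ∀ b ∈ Ω, omul a b ∈ Ω) ∧
    (∀ q : ℚ, ∀ a ∈ Ω, (q : ℝ) • a ∈ Ω) ∧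
    (∀ a ∈ Ω, oconj a ∈ Ω) ∧
    (∀ a ∈ Ω, (∃ q : ℚ, S a = q) ∧ (∃ q : ℚ, N a = q)) := by
  rw [hΩ, setOf_sum_weight_smul_e_eq]
  have hs := sqrt_natCast_mul_self m₁
  have ht := sqrt_natCast_mul_self m₂
  have hstar := star_mem_range_scaledBasis_liftHom hs ht
  have hre := exists_rat_re_of_mem_range_scaledBasis_liftHom hs ht
  have hr := sqrt_natCast_mul_self m₃
  exact ⟨oone_mem_cayleyDouble, fun _ ha _ hb ↦ add_mem_cayleyDouble ha hb,
    fun _ ha _ hb ↦ omul_mem_cayleyDouble hstar hr ha hb,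
    fun q _ ha ↦ ratCast_smul_mem_cayleyDouble q ha,
    fun _ ha ↦ oconj_mem_cayleyDouble hstar ha,
    fun _ ha ↦ ⟨exists_rat_S_eq hstar hre ha, exists_rat_N_eq hstar hre hr ha⟩⟩

/-- The set of octonions with coefficients γᵢ ∈ ℚ times the triquadratic weights
is a conjugation-stable ℚ-subalgebra all of whose elements have rational trace
and norm. -/
theorem triquadratic_rational_subalgebra (m₁ m₂ m₃ : ℕ)
    (h₁ : Squarefree m₁) (h₂ : Squarefree m₂) (h₃ : Squarefree m₃)
    (hp₁ : 0 < m₁) (hp₂ : 0 < m₂) (hp₃ : 0 < m₃)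
    (h12 : m₁ ≠ m₂) (h13 : m₁ ≠ m₃) (h23 : m₂ ≠ m₃)
    (Ω : Set 𝕆)
    (hΩ : Ω = {z : 𝕆 | ∃ γ : Fin 8 → ℚ, z = ∑ i, ((γ i : ℝ) * weight m₁ m₂ m₃ i) • e i}) :
    oone ∈ Ω ∧
    (∀ a ∈ Ω, ∀ b ∈ Ω, a + b ∈ Ω) ∧
    (∀ a ∈ Ω, ∀ b ∈ Ω, omul a b ∈ Ω) ∧
    (∀ q : ℚ, ∀ a ∈ Ω, (q : ℝ) • a ∈ Ω) ∧
    (∀ a ∈ Ω, oconj a ∈ Ω) ∧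
    (∀ a ∈ Ω, (∃ q : ℚ, S a = q) ∧ (∃ q : ℚ, N a = q)) :=
  triquadratic_rational_subalgebra_general m₁ m₂ m₃ Ω hΩ

end Octo
end
end

section
/- Let m₁, m₂, m₃ be distinct square-free positive integers. The set of octonions γ₀ + γ₁√m₁ e₁ + γ₂√m₂ e₂ + γ₃√m₃ e₃ + γ₄√(m₁m₂) e₄ + γ₅√(m₁m₃) e₅ + γ₆√(m₂m₃) e₆ + γ₇√(m₁m₂m₃) e₇ with all γ_i ∈ ℤ is closed under octonionic multiplication and under conjugation, and every element has integer trace and integer norm. -/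
noncomputable section

namespace Octo

/-! Writing `√(mᵢmⱼ) = √mᵢ √mⱼ`, the coordinates of an element of `Ω` are integer multiples of
the monomials in `sᵢ = √mᵢ`. In a product of two such elements every square `sᵢ²` collapses to the
integer `mᵢ`, so `Ω` is closed under multiplication, with an explicit integral multiplication table;
closure under conjugation is a sign change. Since the real part of an element of `Ω` is an integer
and `S z = re (z + z̄)`, `N z = re (z z̄)` with `z + z̄, z z̄ ∈ Ω`, trace and norm are integers. -/

lemma sum_smul_e (c : Fin 8 → ℝ) :
    ∑ i, c i • e i =
      ((⟨c 0, c 1, c 2, c 4⟩ : Quaternion ℝ), (⟨c 3, c 5, c 6, c 7⟩ : Quaternion ℝ)) := by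
  refine Prod.ext ?_ ?_ <;> ext <;>
    simp only [Fin.sum_univ_eight, Prod.fst_add, Prod.snd_add, Prod.smul_fst, Prod.smul_snd,
      Quaternion.re_add, Quaternion.imI_add, Quaternion.imJ_add, Quaternion.imK_add,
      Quaternion.re_smul, Quaternion.imI_smul, Quaternion.imJ_smul, Quaternion.imK_smul] <;>
    simp [e, Quaternion.re_one, Quaternion.imI_one, Quaternion.imJ_one, Quaternion.imK_one,
      Quaternion.re_zero, Quaternion.imI_zero, Quaternion.imJ_zero, Quaternion.imK_zero]

section Triquadratic

variable (s₁ s₂ s₃ : ℝ)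

def monomial : Fin 8 → ℝ :=
  ![1, s₁, s₂, s₃, s₁ * s₂, s₁ * s₃, s₂ * s₃, s₁ * s₂ * s₃]

def ofCoeffs (a : Fin 8 → ℤ) : 𝕆 := ∑ i, ((a i : ℝ) * monomial s₁ s₂ s₃ i) • e i

def triquadLattice : Set 𝕆 := Set.range (ofCoeffs s₁ s₂ s₃)

lemma ofCoeffs_eq (a : Fin 8 → ℤ) :
    ofCoeffs s₁ s₂ s₃ a =
      ((⟨a 0, a 1 * s₁, a 2 * s₂, a 4 * (s₁ * s₂)⟩ : Quaternion ℝ),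
        (⟨a 3 * s₃, a 5 * (s₁ * s₃), a 6 * (s₂ * s₃), a 7 * (s₁ * s₂ * s₃)⟩ : Quaternion ℝ)) := by
  rw [ofCoeffs, sum_smul_e]
  refine Prod.ext ?_ ?_ <;> ext <;> simp [monomial, mul_assoc]

lemma re_ofCoeffs (a : Fin 8 → ℤ) : re (ofCoeffs s₁ s₂ s₃ a) = a 0 := by
  simp [re, ofCoeffs_eq]

lemma ofCoeffs_add (a b : Fin 8 → ℤ) :
    ofCoeffs s₁ s₂ s₃ (a + b) = ofCoeffs s₁ s₂ s₃ a + ofCoeffs s₁ s₂ s₃ b := by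
  simp [ofCoeffs, add_mul, add_smul, Finset.sum_add_distrib]

lemma oconj_ofCoeffs (a : Fin 8 → ℤ) :
    oconj (ofCoeffs s₁ s₂ s₃ a) =
      ofCoeffs s₁ s₂ s₃ ![a 0, -a 1, -a 2, -a 3, -a 4, -a 5, -a 6, -a 7] := by
  refine Prod.ext ?_ ?_ <;> ext <;>
    simp only [oconj, Quaternion.re_star, Quaternion.imI_star, Quaternion.imJ_star,
      Quaternion.imK_star, Quaternion.re_neg, Quaternion.imI_neg, Quaternion.imJ_neg,
      Quaternion.imK_neg] <;>
    simp [ofCoeffs_eq]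

def mulCoeffs (m₁ m₂ m₃ : ℤ) (a b : Fin 8 → ℤ) : Fin 8 → ℤ :=
  ![a 0*b 0 - m₁*(a 1*b 1) - m₂*(a 2*b 2) - m₃*(a 3*b 3) - m₁*m₂*(a 4*b 4) - m₁*m₃*(a 5*b 5)
      - m₂*m₃*(a 6*b 6) - m₁*m₂*m₃*(a 7*b 7),
    a 0*b 1 + a 1*b 0 + m₂*(a 2*b 4 - a 4*b 2) + m₃*(a 5*b 3 - a 3*b 5) + m₂*m₃*(a 7*b 6 - a 6*b 7),
    a 0*b 2 + a 2*b 0 + m₁*(a 4*b 1 - a 1*b 4) + m₃*(a 6*b 3 - a 3*b 6) + m₁*m₃*(a 5*b 7 - a 7*b 5),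
    a 0*b 3 + a 3*b 0 + m₁*(a 1*b 5 - a 5*b 1) + m₂*(a 2*b 6 - a 6*b 2) + m₁*m₂*(a 4*b 7 - a 7*b 4),
    a 0*b 4 + a 4*b 0 + a 1*b 2 - a 2*b 1 + m₃*(a 7*b 3 + a 6*b 5 - a 5*b 6 - a 3*b 7),
    a 0*b 5 + a 5*b 0 + a 3*b 1 - a 1*b 3 + m₂*(a 7*b 2 - a 6*b 4 + a 4*b 6 - a 2*b 7),
    a 0*b 6 + a 6*b 0 + a 3*b 2 - a 2*b 3 + m₁*(a 5*b 4 - a 7*b 1 - a 4*b 5 + a 1*b 7),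
    a 0*b 7 + a 7*b 0 + a 6*b 1 - a 5*b 2 - a 4*b 3 + a 3*b 4 + a 2*b 5 - a 1*b 6]

variable {s₁ s₂ s₃} {m₁ m₂ m₃ : ℤ}

lemma omul_ofCoeffs (h₁ : s₁ * s₁ = m₁) (h₂ : s₂ * s₂ = m₂) (h₃ : s₃ * s₃ = m₃)
    (a b : Fin 8 → ℤ) :
    omul (ofCoeffs s₁ s₂ s₃ a) (ofCoeffs s₁ s₂ s₃ b) =
      ofCoeffs s₁ s₂ s₃ (mulCoeffs m₁ m₂ m₃ a b) := by
  refine Prod.ext ?_ ?_ <;> ext <;>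
    simp only [omul, Quaternion.re_mul, Quaternion.imI_mul, Quaternion.imJ_mul,
      Quaternion.imK_mul, Quaternion.re_sub, Quaternion.imI_sub, Quaternion.imJ_sub,
      Quaternion.imK_sub, Quaternion.re_add, Quaternion.imI_add, Quaternion.imJ_add,
      Quaternion.imK_add, Quaternion.re_star, Quaternion.imI_star, Quaternion.imJ_star,
      Quaternion.imK_star] <;>
    simp only [ofCoeffs_eq, mulCoeffs, Matrix.cons_val] <;>
    push_cast [← h₁, ← h₂, ← h₃] <;> ring

lemma omul_mem_triquadLattice (h₁ : s₁ * s₁ = m₁) (h₂ : s₂ * s₂ = m₂) (h₃ : s₃ * s₃ = m₃)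
    {x y : 𝕆} (hx : x ∈ triquadLattice s₁ s₂ s₃) (hy : y ∈ triquadLattice s₁ s₂ s₃) :
    omul x y ∈ triquadLattice s₁ s₂ s₃ := by
  obtain ⟨a, rfl⟩ := hx
  obtain ⟨b, rfl⟩ := hy
  exact ⟨_, (omul_ofCoeffs h₁ h₂ h₃ a b).symm⟩

lemma oconj_mem_triquadLattice {x : 𝕆} (hx : x ∈ triquadLattice s₁ s₂ s₃) :
    oconj x ∈ triquadLattice s₁ s₂ s₃ := by
  obtain ⟨a, rfl⟩ := hx
  exact ⟨_, (oconj_ofCoeffs s₁ s₂ s₃ a).symm⟩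

lemma add_mem_triquadLattice {x y : 𝕆} (hx : x ∈ triquadLattice s₁ s₂ s₃)
    (hy : y ∈ triquadLattice s₁ s₂ s₃) : x + y ∈ triquadLattice s₁ s₂ s₃ := by
  obtain ⟨a, rfl⟩ := hx
  obtain ⟨b, rfl⟩ := hy
  exact ⟨a + b, ofCoeffs_add s₁ s₂ s₃ a b⟩

lemma exists_re_eq_intCast {x : 𝕆} (hx : x ∈ triquadLattice s₁ s₂ s₃) : ∃ n : ℤ, re x = n := by
  obtain ⟨a, rfl⟩ := hx
  exact ⟨a 0, re_ofCoeffs s₁ s₂ s₃ a⟩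

lemma exists_S_eq_intCast {x : 𝕆} (hx : x ∈ triquadLattice s₁ s₂ s₃) : ∃ n : ℤ, S x = n :=
  exists_re_eq_intCast (add_mem_triquadLattice hx (oconj_mem_triquadLattice hx))

lemma exists_N_eq_intCast (h₁ : s₁ * s₁ = m₁) (h₂ : s₂ * s₂ = m₂) (h₃ : s₃ * s₃ = m₃)
    {x : 𝕆} (hx : x ∈ triquadLattice s₁ s₂ s₃) : ∃ n : ℤ, N x = n :=
  exists_re_eq_intCast (omul_mem_triquadLattice h₁ h₂ h₃ hx (oconj_mem_triquadLattice hx))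

end Triquadratic

lemma weight_eq_monomial (m₁ m₂ m₃ : ℕ) :
    weight m₁ m₂ m₃ = monomial √m₁ √m₂ √m₃ := by
  ext i
  fin_cases i <;> simp [weight, monomial, Real.sqrt_mul (Nat.cast_nonneg _)]

theorem triquadratic_integral_lattice_general (m₁ m₂ m₃ : ℕ)
    (Ω : Set 𝕆)
    (hΩ : Ω = {z : 𝕆 | ∃ γ : Fin 8 → ℤ, z = ∑ i, ((γ i : ℝ) * weight m₁ m₂ m₃ i) • e i}) :
    (∀ a ∈ Ω, ∀ b ∈ Ω, omul a b ∈ Ω) ∧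
    (∀ a ∈ Ω, oconj a ∈ Ω) ∧
    (∀ a ∈ Ω, (∃ n : ℤ, S a = n) ∧ (∃ n : ℤ, N a = n)) := by
  have hsqrt (m : ℕ) : √(m : ℝ) * √(m : ℝ) = ((m : ℤ) : ℝ) := by
    rw [Int.cast_natCast, Real.mul_self_sqrt (Nat.cast_nonneg m)]
  obtain rfl : Ω = triquadLattice √m₁ √m₂ √m₃ := by
    ext z
    simp [hΩ, triquadLattice, ofCoeffs, weight_eq_monomial, eq_comm]
  exact ⟨fun a ha b hb ↦ omul_mem_triquadLattice (hsqrt m₁) (hsqrt m₂) (hsqrt m₃) ha hb,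
    fun a ha ↦ oconj_mem_triquadLattice ha,
    fun a ha ↦ ⟨exists_S_eq_intCast ha, exists_N_eq_intCast (hsqrt m₁) (hsqrt m₂) (hsqrt m₃) ha⟩⟩

/-- The set of octonions with integer coefficients times the triquadratic weights
is closed under multiplication and conjugation, and all its elements have
integer trace and norm. -/
theorem triquadratic_integral_lattice (m₁ m₂ m₃ : ℕ)
    (h₁ : Squarefree m₁) (h₂ : Squarefree m₂) (h₃ : Squarefree m₃)
    (hp₁ : 0 < m₁) (hp₂ : 0 < m₂) (hp₃ : 0 < m₃)
    (h12 : m₁ ≠ m₂) (h13 : m₁ ≠ m₃) (h23 : m₂ ≠ m₃)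
    (Ω : Set 𝕆)
    (hΩ : Ω = {z : 𝕆 | ∃ γ : Fin 8 → ℤ, z = ∑ i, ((γ i : ℝ) * weight m₁ m₂ m₃ i) • e i}) :
    (∀ a ∈ Ω, ∀ b ∈ Ω, omul a b ∈ Ω) ∧
    (∀ a ∈ Ω, oconj a ∈ Ω) ∧
    (∀ a ∈ Ω, (∃ n : ℤ, S a = n) ∧ (∃ n : ℤ, N a = n)) :=
  triquadratic_integral_lattice_general m₁ m₂ m₃ Ω hΩ

end Octo
end
end
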